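/- (Non-collapsing representations, Proposition 1, batch form at the logit level.) Let K > 1, B ≥ 1, M ≥ 1. Suppose the anchor logit vectors collapse, i.e., s_{i,m} = s ∈ ℝ^K for all i ∈ {1,…,B} and m ∈ {1,…,M}, so that every anchor prediction p_{i,m} = softmax s and the average prediction p̄ = (1/(MB)) ∑_{i=1}^B ∑_{m=1}^M p_{i,m} equals softmax s. Suppose each target p⁺_i ∈ ℝ^K is a probability vector with p⁺_i ≠ u_K. Then for every i ∈ {1,…,B} and m ∈ {1,…,M}, the sum of the Euclidean norm of the gradient at s of s ↦ H(p⁺_i, softmax s) and the Euclidean norm of the gradient at s of s ↦ H(softmax s) is strictly positive. -/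

import Mathlib

open Real BigOperators

/-- The softmax map on `ℝ^K`. -/
noncomputable def softmax {K : ℕ} (s : EuclideanSpace ℝ (Fin K)) : EuclideanSpace ℝ (Fin K) :=
  (WithLp.equiv 2 (Fin K → ℝ)).symm fun k => Real.exp (s k) / ∑ j, Real.exp (s j)

/-- Cross-entropy `H(p, q) = -∑ k, p k * log (q k)`. -/
noncomputable def crossEntropy {K : ℕ} (p q : EuclideanSpace ℝ (Fin K)) : ℝ :=
  -∑ k, p k * Real.log (q k)

/-- Entropy `H(p) = -∑ k, p k * log (p k)`. -/
noncomputable def entropy {K : ℕ} (p : EuclideanSpace ℝ (Fin K)) : ℝ :=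
  -∑ k, p k * Real.log (p k)

/-- A probability vector: nonnegative components summing to 1. -/
def IsProbVec {K : ℕ} (p : EuclideanSpace ℝ (Fin K)) : Prop :=
  (∀ k, 0 ≤ p k) ∧ ∑ k, p k = 1

/-- The uniform distribution `u_K`, with every component `1/K`. -/
noncomputable def uniformDist (K : ℕ) : EuclideanSpace ℝ (Fin K) :=
  (WithLp.equiv 2 (Fin K → ℝ)).symm fun _ => 1 / (K : ℝ)

/-!
Collapse makes every prediction `softmax s`, and the batch average of copies of one vector is that
vector. With `Z t = ∑ j, exp (t j)` one has `H(p, softmax t) = log Z t - ⟪p, t⟫` (as `∑ p = 1`) and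
`H(softmax t) = log Z t - ⟪softmax t, t⟫`, whose gradients at `s` are `softmax s - p` and
`k ↦ softmax s k * (⟪softmax s, s⟫ - s k)`. If the entropy gradient vanishes, positivity of
`softmax s` forces `s` to be constant, so `softmax s = u_K`; the cross-entropy gradient is then
`u_K - p⁺ ≠ 0`.
-/

section GradientCalculus

variable {F : Type*} [NormedAddCommGroup F] [InnerProductSpace ℝ F] [CompleteSpace F]
  {f g : F → ℝ} {f' g' x : F}

theorem HasGradientAt.sub (hf : HasGradientAt f f' x) (hg : HasGradientAt g g' x) :
    HasGradientAt (fun y => f y - g y) (f' - g') x := by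
  rw [hasGradientAt_iff_hasFDerivAt, map_sub]
  exact hf.hasFDerivAt.sub hg.hasFDerivAt

theorem HasGradientAt.mul (hf : HasGradientAt f f' x) (hg : HasGradientAt g g' x) :
    HasGradientAt (fun y => f y * g y) (f x • g' + g x • f') x := by
  rw [hasGradientAt_iff_hasFDerivAt, map_add, map_smul, map_smul]
  exact hf.hasFDerivAt.mul hg.hasFDerivAt

theorem HasDerivAt.comp_hasGradientAt {φ : ℝ → ℝ} {φ' : ℝ} (x : F) (hφ : HasDerivAt φ φ' (f x))
    (hf : HasGradientAt f f' x) : HasGradientAt (fun y => φ (f y)) (φ' • f') x := by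
  rw [hasGradientAt_iff_hasFDerivAt, map_smul]
  exact hφ.comp_hasFDerivAt x hf.hasFDerivAt

theorem HasGradientAt.sum {ι : Type*} {u : Finset ι} {f : ι → F → ℝ} {f' : ι → F}
    (h : ∀ i ∈ u, HasGradientAt (f i) (f' i) x) :
    HasGradientAt (fun y => ∑ i ∈ u, f i y) (∑ i ∈ u, f' i) x := by
  rw [hasGradientAt_iff_hasFDerivAt, map_sum]
  exact HasFDerivAt.fun_sum h

end GradientCalculus

theorem EuclideanSpace.hasGradientAt_apply {ι : Type*} [Fintype ι] [DecidableEq ι] (k : ι)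
    (s : EuclideanSpace ℝ ι) :
    HasGradientAt (fun t : EuclideanSpace ℝ ι => t k) (EuclideanSpace.single k 1) s := by
  rw [hasGradientAt_iff_hasFDerivAt]
  refine (EuclideanSpace.proj k : EuclideanSpace ℝ ι →L[ℝ] ℝ).hasFDerivAt.congr_fderiv ?_
  ext t
  simp [InnerProductSpace.toDual_apply_apply, EuclideanSpace.inner_single_left]

theorem EuclideanSpace.hasGradientAt_sum_apply {ι : Type*} [Fintype ι] {φ : ι → ℝ → ℝ}
    {φ' : ι → ℝ} {s : EuclideanSpace ℝ ι} (h : ∀ k, HasDerivAt (φ k) (φ' k) (s k)) :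
    HasGradientAt (fun t : EuclideanSpace ℝ ι => ∑ k, φ k (t k)) (WithLp.toLp 2 φ') s := by
  classical
  have hvec : WithLp.toLp 2 φ' = ∑ k, φ' k • EuclideanSpace.single k (1 : ℝ) := by
    ext k
    simp [Pi.single_apply]
  rw [hvec]
  exact HasGradientAt.sum fun k _ => (h k).comp_hasGradientAt s (hasGradientAt_apply k s)

section Softmax

variable {K : ℕ}

theorem softmax_apply (s : EuclideanSpace ℝ (Fin K)) (k : Fin K) :
    softmax s k = exp (s k) / ∑ j, exp (s j) := rfl

theorem softmax_eq_uniformDist_of_forall_eq {s : EuclideanSpace ℝ (Fin K)} {c : ℝ}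
    (h : ∀ k, s k = c) : softmax s = uniformDist K := by
  ext k
  simp [softmax_apply, uniformDist, h, div_mul_cancel_right₀ (exp_ne_zero c)]

theorem sum_softmax_mul_self (t : EuclideanSpace ℝ (Fin K)) :
    ∑ k, softmax t k * t k = (∑ k, exp (t k) * t k) / ∑ j, exp (t j) := by
  simp only [softmax_apply, Finset.sum_div]
  exact Finset.sum_congr rfl fun k _ => div_mul_eq_mul_div _ _ _

variable [NeZero K]

theorem sum_exp_pos (s : EuclideanSpace ℝ (Fin K)) : 0 < ∑ j, exp (s j) :=
  Finset.sum_pos (fun j _ => exp_pos (s j)) Finset.univ_nonempty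

theorem softmax_pos (s : EuclideanSpace ℝ (Fin K)) (k : Fin K) : 0 < softmax s k :=
  div_pos (exp_pos _) (sum_exp_pos s)

theorem log_softmax_apply (s : EuclideanSpace ℝ (Fin K)) (k : Fin K) :
    log (softmax s k) = s k - log (∑ j, exp (s j)) := by
  rw [softmax_apply, log_div (exp_ne_zero _) (sum_exp_pos s).ne', log_exp]

theorem sum_softmax (s : EuclideanSpace ℝ (Fin K)) : ∑ k, softmax s k = 1 := by
  simp only [softmax_apply, ← Finset.sum_div]
  exact div_self (sum_exp_pos s).ne'

theorem hasGradientAt_log_sum_exp (s : EuclideanSpace ℝ (Fin K)) :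
    HasGradientAt (fun t : EuclideanSpace ℝ (Fin K) => log (∑ j, exp (t j))) (softmax s) s := by
  have h := (hasDerivAt_log (sum_exp_pos s).ne').comp_hasGradientAt s
    (EuclideanSpace.hasGradientAt_sum_apply fun k => hasDerivAt_exp (s k))
  convert h using 1
  ext k
  simp [softmax_apply, div_eq_inv_mul]

end Softmax

section Gradients

variable {K : ℕ} [NeZero K]

theorem crossEntropy_softmax {p : EuclideanSpace ℝ (Fin K)} (hp : ∑ k, p k = 1)
    (t : EuclideanSpace ℝ (Fin K)) :
    crossEntropy p (softmax t) = log (∑ j, exp (t j)) - ∑ k, p k * t k := by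
  simp only [crossEntropy, log_softmax_apply, mul_sub, Finset.sum_sub_distrib, ← Finset.sum_mul,
    hp]
  ring

theorem hasGradientAt_crossEntropy_softmax {p : EuclideanSpace ℝ (Fin K)} (hp : ∑ k, p k = 1)
    (s : EuclideanSpace ℝ (Fin K)) :
    HasGradientAt (fun t => crossEntropy p (softmax t)) (softmax s - p) s := by
  simp only [crossEntropy_softmax hp]
  exact (hasGradientAt_log_sum_exp s).sub
    (EuclideanSpace.hasGradientAt_sum_apply fun k => hasDerivAt_const_mul (p k))

theorem entropy_softmax (t : EuclideanSpace ℝ (Fin K)) :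
    entropy (softmax t) = log (∑ j, exp (t j)) - (∑ k, exp (t k) * t k) * (∑ j, exp (t j))⁻¹ := by
  simp only [entropy, log_softmax_apply, mul_sub, Finset.sum_sub_distrib, ← Finset.sum_mul,
    sum_softmax, sum_softmax_mul_self, div_eq_mul_inv]
  ring

theorem hasGradientAt_entropy_softmax (s : EuclideanSpace ℝ (Fin K)) :
    HasGradientAt (fun t => entropy (softmax t))
      (WithLp.toLp 2 fun k => softmax s k * (∑ j, softmax s j * s j - s k)) s := by
  simp only [entropy_softmax]
  have hsumExp := EuclideanSpace.hasGradientAt_sum_apply fun k => hasDerivAt_exp (s k)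
  have hsumExpMul := EuclideanSpace.hasGradientAt_sum_apply fun k =>
    (hasDerivAt_exp (s k)).mul (hasDerivAt_id' (s k))
  have h := (hasGradientAt_log_sum_exp s).sub
    (hsumExpMul.mul ((hasDerivAt_inv (sum_exp_pos s).ne').comp_hasGradientAt s hsumExp))
  convert h using 1
  · rfl
  ext k
  have hZ := (sum_exp_pos s).ne'
  simp only [sum_softmax_mul_self]
  simp only [softmax_apply, PiLp.sub_apply, PiLp.add_apply, PiLp.smul_apply,
    smul_eq_mul, Pi.mul_apply]
  field_simp
  ring

theorem softmax_eq_uniformDist_of_gradient_entropy_softmax_eq_zero {s : EuclideanSpace ℝ (Fin K)}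
    (h : gradient (fun t => entropy (softmax t)) s = 0) : softmax s = uniformDist K := by
  rw [(hasGradientAt_entropy_softmax s).gradient] at h
  refine softmax_eq_uniformDist_of_forall_eq (c := ∑ j, softmax s j * s j) fun k => ?_
  have hk : softmax s k * (∑ j, softmax s j * s j - s k) = 0 := congrArg (· k) h
  linarith [(mul_eq_zero.mp hk).resolve_left (softmax_pos s k).ne']

theorem gradient_crossEntropy_softmax_add_gradient_entropy_softmax_pos
    {p s : EuclideanSpace ℝ (Fin K)} (hp : ∑ k, p k = 1) (hpu : p ≠ uniformDist K) :
    0 < ‖gradient (fun t => crossEntropy p (softmax t)) s‖ +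
      ‖gradient (fun t => entropy (softmax t)) s‖ := by
  by_contra! hle
  obtain ⟨hce, hent⟩ := (add_eq_zero_iff_of_nonneg (norm_nonneg _) (norm_nonneg _)).mp
    (hle.antisymm (by positivity))
  rw [norm_eq_zero, (hasGradientAt_crossEntropy_softmax hp s).gradient, sub_eq_zero] at hce
  exact hpu (hce.symm.trans
    (softmax_eq_uniformDist_of_gradient_entropy_softmax_eq_zero (norm_eq_zero.mp hent)))

end Gradients

theorem one_div_mul_smul_sum_sum_const {E : Type*} [AddCommGroup E] [Module ℝ E] {B M : ℕ}
    (hB : B ≠ 0) (hM : M ≠ 0) (v : E) :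
    (1 / ((M : ℝ) * (B : ℝ))) • ∑ _i : Fin B, ∑ _m : Fin M, v = v := by
  simp only [Finset.sum_const, Finset.card_univ, Fintype.card_fin, ← Nat.cast_smul_eq_nsmul ℝ,
    smul_smul]
  rw [one_div_mul_eq_div, mul_comm (B : ℝ),
    div_self (mul_ne_zero (Nat.cast_ne_zero.mpr hM) (Nat.cast_ne_zero.mpr hB)), one_smul]

/-- Non-collapsing representations, Proposition 1, batch form at the logit level:
if all anchor logit vectors collapse to a common `s`, then every anchor prediction equals
`softmax s`, the average prediction `p̄` equals `softmax s`, and for every `i, m` the sum of the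
Euclidean norms of the gradients at `s` of `s ↦ H(p⁺_i, softmax s)` and of `s ↦ H(softmax s)`
is strictly positive, provided each target `p⁺_i` is a probability vector different from `u_K`. -/
theorem noncollapsing_representations_batch (K B M : ℕ) (hK : 1 < K) (hB : 1 ≤ B) (hM : 1 ≤ M)
    (s : EuclideanSpace ℝ (Fin K))
    (slog : Fin B → Fin M → EuclideanSpace ℝ (Fin K))
    (hcollapse : ∀ i m, slog i m = s)
    (p : Fin B → Fin M → EuclideanSpace ℝ (Fin K))
    (hpred : ∀ i m, p i m = softmax (slog i m))
    (pbar : EuclideanSpace ℝ (Fin K))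
    (hpbar : pbar = (1 / ((M : ℝ) * (B : ℝ))) • ∑ i : Fin B, ∑ m : Fin M, p i m)
    (psharp : Fin B → EuclideanSpace ℝ (Fin K))
    (hprob : ∀ i, IsProbVec (psharp i))
    (hne : ∀ i, psharp i ≠ uniformDist K) :
    (∀ i m, p i m = softmax s) ∧ pbar = softmax s ∧
      ∀ (i : Fin B) (m : Fin M),
        0 < ‖gradient (fun s => crossEntropy (psharp i) (softmax s)) s‖ +
            ‖gradient (fun s => entropy (softmax s)) s‖ := by
  have : NeZero K := ⟨by omega⟩
  have hps : ∀ i m, p i m = softmax s := fun i m => by rw [hpred, hcollapse]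
  refine ⟨hps, ?_, fun i _ =>
    gradient_crossEntropy_softmax_add_gradient_entropy_softmax_pos (hprob i).2 (hne i)⟩
  simp only [hpbar, hps]
  exact one_div_mul_smul_sum_sum_const (by omega) (by omega) _
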